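/- Let ψ(x, z) = Σ_{n=1}^∞ e^{−πn²x}·cos(sqrt(πx)·n·z). For δ > 0 real and z complex, ψ(i + δ, z) = 2·ψ(4δ, (sqrt(i+δ)/sqrt(δ))·z) − ψ(δ, (sqrt(i+δ)/sqrt(δ))·z). -/

import Mathlib

open Real Complex

/-! Since `exp (-π m² i) = (-1)^m` and `√(π (i + δ)) = √(π δ) · (√(i + δ) / √δ)`, the series
`ψ(i + δ, z)` is the alternating series `∑ (-1)^m g m` of the terms `g m` of `ψ(δ, w)`, where
`w = (√(i + δ) / √δ) z`. An alternating sum is twice its even part minus the full sum, and the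
even part `∑ g (2k)` is `ψ(4δ, w)` because `√(4πδ) = 2 √(πδ)`. Absolute convergence comes from
the Jacobi theta series. -/

noncomputable def psiTheta (x z : ℂ) : ℂ :=
  ∑' n : ℕ, Complex.exp (-(π : ℂ) * ((n : ℂ) + 1) ^ 2 * x) *
    Complex.cos (((π : ℂ) * x) ^ (1 / 2 : ℂ) * ((n : ℂ) + 1) * z)

theorem tsum_neg_one_pow_succ_mul {α : Type*} [Ring α] [UniformSpace α] [IsUniformAddGroup α]
    [CompleteSpace α] [T2Space α] {f : ℕ → α} (hf : Summable f) :
    ∑' n, (-1) ^ (n + 1) * f n = 2 * ∑' k, f (2 * k + 1) - ∑' n, f n := by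
  have he : Summable fun k ↦ f (2 * k) := hf.comp_injective (mul_right_injective₀ two_ne_zero)
  have ho : Summable fun k ↦ f (2 * k + 1) :=
    hf.comp_injective ((add_left_injective 1).comp (mul_right_injective₀ two_ne_zero))
  have h_odd (k : ℕ) : (-1 : α) ^ (2 * k + 1) = -1 := (odd_two_mul_add_one k).neg_one_pow
  have h_even (k : ℕ) : (-1 : α) ^ (2 * k + 1 + 1) = 1 := Even.neg_one_pow ⟨k + 1, by ring⟩
  rw [← tsum_even_add_odd he ho, ← tsum_even_add_odd (f := fun n ↦ (-1) ^ (n + 1) * f n)] <;>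
    simp only [h_odd, h_even, neg_one_mul, one_mul, tsum_neg]
  · rw [two_mul]
    abel
  · exact he.neg
  · exact ho

lemma ofReal_mul_cpow {r : ℝ} (hr : 0 < r) (x s : ℂ) : ((r : ℂ) * x) ^ s = (r : ℂ) ^ s * x ^ s := by
  rcases eq_or_ne x 0 with rfl | hx
  · rcases eq_or_ne s 0 with rfl | hs <;> simp [zero_cpow, *]
  have hr' : (r : ℂ) ≠ 0 := ofReal_ne_zero.2 hr.ne'
  rw [cpow_def_of_ne_zero (mul_ne_zero hr' hx), log_ofReal_mul hr hx, ofReal_log hr.le, add_mul,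
    Complex.exp_add, ← cpow_def_of_ne_zero hr', ← cpow_def_of_ne_zero hx]

lemma exp_neg_pi_mul_sq_mul_I_add (m : ℕ) (x : ℂ) :
    cexp (-π * m ^ 2 * (I + x)) = (-1) ^ m * cexp (-π * m ^ 2 * x) := by
  have : cexp (-π * m ^ 2 * I) = (-1) ^ m := by
    rw [show -π * m ^ 2 * I = (m ^ 2 : ℕ) * -(π * I) by push_cast; ring, Complex.exp_nat_mul,
      Complex.exp_neg, exp_pi_mul_I, sq, pow_mul]
    rcases Nat.even_or_odd m with h | h <;> simp [h.neg_one_pow]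
  rw [mul_add, Complex.exp_add, this]

noncomputable def psiTerm (x z : ℂ) (n : ℕ) : ℂ :=
  cexp (-π * (n + 1) ^ 2 * x) * Complex.cos ((π * x) ^ (1 / 2 : ℂ) * (n + 1) * z)

lemma psiTheta_eq_tsum_psiTerm (x z : ℂ) : psiTheta x z = ∑' n, psiTerm x z n := rfl

lemma psiTerm_eq_jacobiTheta₂_term (x z : ℂ) (n : ℕ) :
    psiTerm x z n = (jacobiTheta₂_term (n + 1) ((π * x) ^ (1 / 2 : ℂ) * z / (2 * π)) (I * x) +
      jacobiTheta₂_term (n + 1) (-((π * x) ^ (1 / 2 : ℂ) * z) / (2 * π)) (I * x)) / 2 := by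
  have hπ : (π : ℂ) ≠ 0 := ofReal_ne_zero.2 pi_ne_zero
  simp only [psiTerm, jacobiTheta₂_term, Complex.cos, mul_div_assoc', mul_add, ← Complex.exp_add]
  congr 3 <;> push_cast <;> field_simp <;> linear_combination -(π * (n + 1) * x) * I_sq

lemma summable_psiTerm {x : ℂ} (hx : 0 < x.re) (z : ℂ) : Summable (psiTerm x z) := by
  have h (w : ℂ) : Summable fun n : ℕ ↦ jacobiTheta₂_term (n + 1) w (I * x) := by
    have hℤ := (summable_jacobiTheta₂_term_iff w (I * x)).2 (by simpa)
    exact_mod_cast (summable_nat_add_iff 1).2 (hℤ.comp_injective Nat.cast_injective)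
  exact (((h _).add (h _)).div_const 2).congr fun n ↦ (psiTerm_eq_jacobiTheta₂_term x z n).symm

lemma psiTerm_four_mul (x z : ℂ) (k : ℕ) : psiTerm (4 * x) z k = psiTerm x z (2 * k + 1) := by
  have hsqrt : (π * (4 * x)) ^ (1 / 2 : ℂ) = 2 * (π * x) ^ (1 / 2 : ℂ) := by
    rw [mul_left_comm, show (4 : ℂ) = ((2 ^ 2 : ℝ) : ℂ) by norm_num, ofReal_mul_cpow (by norm_num),
      ofReal_pow, one_div, sq_cpow_two_inv (by norm_num)]
    norm_num
  simp only [psiTerm, hsqrt]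
  push_cast
  ring_nf

lemma psiTerm_I_add {x : ℂ} (hx : x ≠ 0) (z : ℂ) (n : ℕ) :
    psiTerm (I + x) z n =
      (-1) ^ (n + 1) * psiTerm x ((I + x) ^ (1 / 2 : ℂ) / x ^ (1 / 2 : ℂ) * z) n := by
  have hsqrt : (π * (I + x)) ^ (1 / 2 : ℂ) =
      (π * x) ^ (1 / 2 : ℂ) * ((I + x) ^ (1 / 2 : ℂ) / x ^ (1 / 2 : ℂ)) := by
    have : x ^ (1 / 2 : ℂ) ≠ 0 := by simp [hx]
    rw [ofReal_mul_cpow pi_pos, ofReal_mul_cpow pi_pos]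
    field_simp
  have := exp_neg_pi_mul_sq_mul_I_add (n + 1) x
  push_cast at this
  rw [psiTerm, psiTerm, this, hsqrt]
  ring_nf

theorem psi_even_odd_split (δ : ℝ) (hδ : 0 < δ) (z : ℂ) :
    psiTheta (Complex.I + (δ : ℂ)) z =
      2 * psiTheta (4 * (δ : ℂ))
          (((Complex.I + (δ : ℂ)) ^ (1 / 2 : ℂ) / ((δ : ℂ) ^ (1 / 2 : ℂ))) * z) -
        psiTheta (δ : ℂ)
          (((Complex.I + (δ : ℂ)) ^ (1 / 2 : ℂ) / ((δ : ℂ) ^ (1 / 2 : ℂ))) * z) := by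
  set w := (Complex.I + (δ : ℂ)) ^ (1 / 2 : ℂ) / ((δ : ℂ) ^ (1 / 2 : ℂ)) * z
  have hsum : Summable (psiTerm δ w) := summable_psiTerm (by simpa using hδ) w
  simp only [psiTheta_eq_tsum_psiTerm]
  calc ∑' n, psiTerm (I + δ) z n = ∑' n, (-1) ^ (n + 1) * psiTerm δ w n :=
        tsum_congr (psiTerm_I_add (ofReal_ne_zero.2 hδ.ne') z)
    _ = 2 * ∑' k, psiTerm δ w (2 * k + 1) - ∑' n, psiTerm δ w n := tsum_neg_one_pow_succ_mul hsum
    _ = 2 * ∑' k, psiTerm (4 * δ) w k - ∑' n, psiTerm δ w n := by simp only [psiTerm_four_mul]
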